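/- arXiv:2503.18046 — 2 statements merged into one kernel-verified Lean document; each statement's English description precedes it below -/
import Mathlib

section
/- Let {X_n} be a ψ-irreducible, aperiodic Markov chain. Suppose there exist a set A ∈ ℬ^+(𝒳) and functions V^(n) : 𝒳 → ℝ such that: (1) sup_{x ∈ A^c} V^(n)(x) < ∞ and V^(n) = 0 on A for all n; (2) PV^(n)(x) ≥ V^(n)(x) − 1 for all x ∈ A^c; (3) sup_{x ∈ A^c, n ≥ 1} V^(n)(x) = ∞. Then {X_n} is not strongly ergodic. -/
open MeasureTheory ENNReal Filter Topology

/-- `retProb P A n x` is the probability, starting from `x`, that the first return time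
`τ_A^+ = inf {k ≥ 1 : X_k ∈ A}` equals `n + 1`. -/
noncomputable def retProb {X : Type*} [MeasurableSpace X] (P : X → Measure X) (A : Set X) :
    ℕ → X → ℝ≥0∞
  | 0 => fun x => P x A
  | (n + 1) => fun x => ∫⁻ y in Aᶜ, retProb P A n y ∂(P x)

/-- Strong ergodicity, expressed through its standard characterization on a set `A` of positive
measure of a `ψ`-irreducible aperiodic chain: the chain returns to `A` almost surely from every
point (Harris recurrence) and `sup_x E_x[τ_A^+] < ∞`. -/
def StronglyErgodicFor {X : Type*} [MeasurableSpace X] (P : X → Measure X) (A : Set X) : Prop :=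
  (∀ x, ∑' n : ℕ, retProb P A n x = 1) ∧
    (⨆ x, ∑' n : ℕ, ((n : ℝ≥0∞) + 1) * retProb P A n x) ≠ ⊤

noncomputable def stayProb {X : Type*} [MeasurableSpace X] (P : X → Measure X) (A : Set X) :
    ℕ → X → ℝ≥0∞
  | 0 => fun _ => 1
  | (n + 1) => fun x => ∫⁻ y in Aᶜ, stayProb P A n y ∂(P x)

section aux
variable {X : Type*} [MeasurableSpace X] {P : X → Measure X} {A : Set X}

lemma meas_setLintegral (hPm : Measurable P) {f : X → ℝ≥0∞} (hf : Measurable f)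
    (hAc : MeasurableSet Aᶜ) : Measurable fun x => ∫⁻ y in Aᶜ, f y ∂(P x) := by
  simp_rw [← lintegral_indicator hAc]
  exact (Measure.measurable_lintegral (hf.indicator hAc)).comp hPm

lemma retProb_le_one (hP : ∀ x, IsProbabilityMeasure (P x)) :
    ∀ n x, retProb P A n x ≤ 1 := by
  intro n
  induction n with
  | zero => intro x; exact prob_le_one
  | succ n ih =>
      intro x
      calc ∫⁻ y in Aᶜ, retProb P A n y ∂(P x) ≤ ∫⁻ _ in Aᶜ, 1 ∂(P x) :=
            lintegral_mono fun y => ih y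
        _ ≤ 1 := by
            rw [setLIntegral_one]
            exact prob_le_one

lemma stayProb_le_one (hP : ∀ x, IsProbabilityMeasure (P x)) :
    ∀ n x, stayProb P A n x ≤ 1 := by
  intro n
  induction n with
  | zero => intro x; exact le_refl 1
  | succ n ih =>
      intro x
      calc ∫⁻ y in Aᶜ, stayProb P A n y ∂(P x) ≤ ∫⁻ _ in Aᶜ, 1 ∂(P x) :=
            lintegral_mono fun y => ih y
        _ ≤ 1 := by rw [setLIntegral_one]; exact prob_le_one

lemma measurable_retProb (hPm : Measurable P) (hA : MeasurableSet A) :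
    ∀ n, Measurable (retProb P A n) := by
  intro n
  induction n with
  | zero => exact (Measure.measurable_coe hA).comp hPm
  | succ n ih => exact meas_setLintegral hPm ih hA.compl

lemma measurable_stayProb (hPm : Measurable P) (hA : MeasurableSet A) :
    ∀ n, Measurable (stayProb P A n) := by
  intro n
  induction n with
  | zero => exact measurable_const
  | succ n ih => exact meas_setLintegral hPm ih hA.compl

lemma stayProb_eq_add (hP : ∀ x, IsProbabilityMeasure (P x)) (hPm : Measurable P)
    (hA : MeasurableSet A) :
    ∀ n x, stayProb P A n x = retProb P A n x + stayProb P A (n + 1) x := by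
  intro n
  induction n with
  | zero =>
      intro x
      have : stayProb P A 1 x = P x Aᶜ := by
        show ∫⁻ _ in Aᶜ, (1 : ℝ≥0∞) ∂(P x) = P x Aᶜ
        rw [setLIntegral_one]
      rw [this]
      show (1 : ℝ≥0∞) = P x A + P x Aᶜ
      rw [measure_add_measure_compl hA]
      exact (measure_univ).symm
  | succ n ih =>
      intro x
      show ∫⁻ y in Aᶜ, stayProb P A n y ∂(P x) = _
      calc ∫⁻ y in Aᶜ, stayProb P A n y ∂(P x)
          = ∫⁻ y in Aᶜ, (retProb P A n y + stayProb P A (n + 1) y) ∂(P x) := by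
            refine lintegral_congr fun y => ih y
        _ = (∫⁻ y in Aᶜ, retProb P A n y ∂(P x)) + ∫⁻ y in Aᶜ, stayProb P A (n + 1) y ∂(P x) :=
            lintegral_add_left ((measurable_retProb hPm hA n)) _
        _ = retProb P A (n + 1) x + stayProb P A (n + 2) x := rfl

lemma stayProb_eq_tail (hP : ∀ x, IsProbabilityMeasure (P x)) (hPm : Measurable P)
    (hA : MeasurableSet A) (hHarris : ∀ x, ∑' n : ℕ, retProb P A n x = 1) :
    ∀ n x, stayProb P A n x = ∑' m : ℕ, retProb P A (n + m) x := by
  intro n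
  induction n with
  | zero =>
      intro x
      show (1 : ℝ≥0∞) = _
      rw [← hHarris x]
      exact tsum_congr fun m => by rw [Nat.zero_add]
  | succ n ih =>
      intro x
      have h1 : stayProb P A n x = retProb P A n x + stayProb P A (n + 1) x :=
        stayProb_eq_add hP hPm hA n x
      have hsplit : ∑' m : ℕ, retProb P A (n + m) x
          = retProb P A (n + 0) x + ∑' m : ℕ, retProb P A (n + (m + 1)) x :=
        tsum_eq_zero_add' (f := fun m => retProb P A (n + m) x) ENNReal.summable
      have h2 : stayProb P A n x = retProb P A n x + ∑' m : ℕ, retProb P A (n + 1 + m) x := by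
        rw [ih x, hsplit, Nat.add_zero]
        congr 1
        exact tsum_congr fun m => by rw [Nat.add_right_comm, Nat.add_assoc]
      have hne : retProb P A n x ≠ ⊤ := (retProb_le_one hP n x).trans_lt one_lt_top |>.ne
      exact (ENNReal.add_right_inj hne).mp (h1.symm.trans h2)

lemma sum_stayProb (hP : ∀ x, IsProbabilityMeasure (P x)) (hPm : Measurable P)
    (hA : MeasurableSet A) :
    ∀ k x, ∑ j ∈ Finset.range k, stayProb P A j x
      = (∑ n ∈ Finset.range k, ((n : ℝ≥0∞) + 1) * retProb P A n x)
        + (k : ℝ≥0∞) * stayProb P A k x := by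
  intro k
  induction k with
  | zero => intro x; simp
  | succ k ih =>
      intro x
      rw [Finset.sum_range_succ, ih x, Finset.sum_range_succ,
        stayProb_eq_add hP hPm hA k x]
      push_cast
      ring

end aux


/-- non-strong ergodicity criterion, sufficiency. If there are a set `A` of
positive measure and functions `V⁽ⁿ⁾ : 𝒳 → ℝ` with (1) `sup_{Aᶜ} V⁽ⁿ⁾ < ∞` and `V⁽ⁿ⁾ = 0` on
`A`; (2) `P V⁽ⁿ⁾ ≥ V⁽ⁿ⁾ − 1` on `Aᶜ`; (3) `sup_{x ∈ Aᶜ, n} V⁽ⁿ⁾(x) = ∞`, then the chain is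
not strongly ergodic. -/
theorem not_strongly_ergodic_of_test_functions {X : Type*} [MeasurableSpace X]
    (P : X → Measure X) (hP : ∀ x, IsProbabilityMeasure (P x)) (hPm : Measurable P)
    (A : Set X) (hA : MeasurableSet A) (hAne : A.Nonempty)
    (V : ℕ → X → ℝ) (hVm : ∀ n, Measurable (V n))
    (h1 : ∀ n, BddAbove (V n '' Aᶜ) ∧ ∀ x ∈ A, V n x = 0)
    (h2 : ∀ n, ∀ x ∈ Aᶜ, V n x - 1 ≤ ∫ y, V n y ∂(P x))
    (h3 : ∀ M : ℝ, ∃ n, ∃ x ∈ Aᶜ, M < V n x) :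
    ¬ StronglyErgodicFor P A := by
  rintro ⟨hHarris, hBound⟩
  set B : ℝ≥0∞ := ⨆ x, ∑' n : ℕ, ((n : ℝ≥0∞) + 1) * retProb P A n x with hBdef
  have hst1 : ∀ j z, (stayProb P A j z).toReal ≤ 1 := by
    intro j z
    have h := stayProb_le_one (P := P) (A := A) hP j z
    have := ENNReal.toReal_mono one_ne_top h
    simpa using this
  have key : ∀ n, ∀ x ∈ Aᶜ, V n x ≤ B.toReal := by
    intro n x hx
    obtain ⟨hbdd, hzero⟩ := h1 n
    obtain ⟨C, hC⟩ := hbdd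
    set S : ℝ := max C 0 with hS
    have hS0 : (0:ℝ) ≤ S := le_max_right C 0
    -- the drift induction
    have drift : ∀ k, ∀ y, V n y ≤ (∑ j ∈ Finset.range k, (stayProb P A j y).toReal)
        + S * (stayProb P A k y).toReal := by
      intro k
      induction k with
      | zero =>
          intro y
          simp only [Finset.range_zero, Finset.sum_empty, zero_add]
          have h1' : (stayProb P A 0 y).toReal = 1 := by simp [stayProb]
          rw [h1', mul_one]
          by_cases hy : y ∈ A
          · rw [hzero y hy]; exact hS0
          · exact le_trans (hC ⟨y, hy, rfl⟩) (le_max_left C 0)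
      | succ k ih =>
          intro y
          by_cases hy : y ∈ A
          · rw [hzero y hy]
            have : (0:ℝ) ≤ ∑ j ∈ Finset.range (k+1), (stayProb P A j y).toReal :=
              Finset.sum_nonneg fun j _ => ENNReal.toReal_nonneg
            nlinarith [mul_nonneg hS0 (ENNReal.toReal_nonneg (a := stayProb P A (k+1) y))]
          · -- y ∈ Aᶜ : use the drift inequality
            set g : X → ℝ := Aᶜ.indicator (fun z =>
              (∑ j ∈ Finset.range k, (stayProb P A j z).toReal)
                + S * (stayProb P A k z).toReal) with hg
            have hqm : ∀ j, Measurable fun z => (stayProb P A j z).toReal :=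
              fun j => (measurable_stayProb hPm hA j).ennreal_toReal
            have hgm : Measurable g := by
              refine Measurable.indicator ?_ hA.compl
              exact (Finset.measurable_sum _ fun j _ => hqm j).add ((hqm k).const_mul S)
            have hg0 : ∀ z, 0 ≤ g z := by
              intro z
              refine Set.indicator_nonneg (fun z _ => ?_) z
              have : (0:ℝ) ≤ ∑ j ∈ Finset.range k, (stayProb P A j z).toReal :=
                Finset.sum_nonneg fun j _ => ENNReal.toReal_nonneg
              nlinarith [mul_nonneg hS0 (ENNReal.toReal_nonneg (a := stayProb P A k z))]
            have hgle : ∀ z, g z ≤ (k : ℝ) + S := by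
              intro z
              by_cases hz : z ∈ Aᶜ
              case neg =>
                rw [hg, Set.indicator_of_notMem hz]; positivity
              case pos =>
                rw [hg, Set.indicator_of_mem hz]
                have hsum : ∑ j ∈ Finset.range k, (stayProb P A j z).toReal ≤ (k:ℝ) := by
                  calc ∑ j ∈ Finset.range k, (stayProb P A j z).toReal
                      ≤ ∑ _j ∈ Finset.range k, (1:ℝ) :=
                        Finset.sum_le_sum fun j _ => hst1 j z
                    _ = (k:ℝ) := by simp
                have hm : S * (stayProb P A k z).toReal ≤ S := by
                  calc S * (stayProb P A k z).toReal ≤ S * 1 :=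
                        mul_le_mul_of_nonneg_left (hst1 k z) hS0
                    _ = S := mul_one S
                linarith
            have hVg : ∀ z, V n z ≤ g z := by
              intro z
              by_cases hz : z ∈ A
              · have : g z = 0 := Set.indicator_of_notMem (by simpa using hz) _
                rw [this, hzero z hz]
              · have : g z = _ := Set.indicator_of_mem (by simpa using hz) _
                rw [this]
                exact ih z
            have hint_g : Integrable g (P y) := by
              have := hP y
              refine Integrable.mono' (integrable_const ((k:ℝ) + S))
                hgm.aestronglyMeasurable (ae_of_all _ fun z => ?_)
              rw [Real.norm_eq_abs, abs_of_nonneg (hg0 z)]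
              exact hgle z
            have hIV : ∫ z, V n z ∂(P y) ≤ ∫ z, g z ∂(P y) := by
              by_cases hiV : Integrable (V n) (P y)
              · exact integral_mono hiV hint_g hVg
              · rw [integral_undef hiV]; exact integral_nonneg hg0
            have hq_int : ∀ j, Integrable (fun z => (stayProb P A j z).toReal)
                ((P y).restrict Aᶜ) := by
              intro j
              have : IsFiniteMeasure ((P y).restrict Aᶜ) := by
                have := hP y
                infer_instance
              refine Integrable.mono' (integrable_const (1:ℝ))
                (hqm j).aestronglyMeasurable (ae_of_all _ fun z => ?_)
              rw [Real.norm_eq_abs, abs_of_nonneg ENNReal.toReal_nonneg]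
              exact hst1 j z
            have hq_itr : ∀ j, ∫ z in Aᶜ, (stayProb P A j z).toReal ∂(P y)
                = (stayProb P A (j+1) y).toReal := by
              intro j
              rw [integral_toReal ((measurable_stayProb hPm hA j).aemeasurable)
                (ae_of_all _ fun z => lt_of_le_of_lt (stayProb_le_one hP j z) one_lt_top)]
              rfl
            have hg_eq : ∫ z, g z ∂(P y)
                = (∑ j ∈ Finset.range k, (stayProb P A (j+1) y).toReal)
                  + S * (stayProb P A (k+1) y).toReal := by
              rw [hg, integral_indicator hA.compl]
              rw [integral_add (integrable_finset_sum _ fun j _ => hq_int j)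
                ((hq_int k).const_mul S), integral_finset_sum _ fun j _ => hq_int j,
                integral_const_mul]
              rw [hq_itr k]
              congr 1
              exact Finset.sum_congr rfl fun j _ => hq_itr j
            have hdrift := h2 n y hy
            have hstep : V n y ≤ 1 + ((∑ j ∈ Finset.range k, (stayProb P A (j+1) y).toReal)
                + S * (stayProb P A (k+1) y).toReal) := by
              have := hIV.trans_eq hg_eq
              linarith
            have hre : ∑ j ∈ Finset.range (k+1), (stayProb P A j y).toReal
                = (∑ j ∈ Finset.range k, (stayProb P A (j+1) y).toReal)
                  + (stayProb P A 0 y).toReal := Finset.sum_range_succ' _ k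
            have h0 : (stayProb P A 0 y).toReal = 1 := by simp [stayProb]
            rw [hre, h0]
            linarith
    -- sum of stay probabilities is bounded by B
    have hsum_le : ∀ k, (∑ j ∈ Finset.range k, (stayProb P A j x).toReal) ≤ B.toReal := by
      intro k
      have hEle : ∑' m : ℕ, ((m : ℝ≥0∞) + 1) * retProb P A m x ≤ B := by
        rw [hBdef]
        exact le_iSup (fun x' => ∑' m : ℕ, ((m : ℝ≥0∞) + 1) * retProb P A m x') x
      have hkey : ∑ j ∈ Finset.range k, stayProb P A j x
          ≤ ∑' m : ℕ, ((m : ℝ≥0∞) + 1) * retProb P A m x := by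
        rw [sum_stayProb hP hPm hA k x]
        have htail : (k : ℝ≥0∞) * stayProb P A k x
            ≤ ∑' m : ℕ, ((m + k : ℝ≥0∞) + 1) * retProb P A (m + k) x := by
          rw [stayProb_eq_tail hP hPm hA hHarris k x, ← ENNReal.tsum_mul_left]
          refine Summable.tsum_le_tsum (fun m => ?_) ENNReal.summable ENNReal.summable
          rw [show k + m = m + k from Nat.add_comm k m]
          refine mul_le_mul_left ?_ _
          push_cast
          calc (k : ℝ≥0∞) ≤ (m : ℝ≥0∞) + k := le_add_self
            _ ≤ (m : ℝ≥0∞) + k + 1 := le_self_add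
        calc (∑ m ∈ Finset.range k, ((m : ℝ≥0∞) + 1) * retProb P A m x)
              + (k : ℝ≥0∞) * stayProb P A k x
            ≤ (∑ m ∈ Finset.range k, ((m : ℝ≥0∞) + 1) * retProb P A m x)
              + ∑' m : ℕ, ((m + k : ℝ≥0∞) + 1) * retProb P A (m + k) x :=
              add_le_add_right htail _
          _ = ∑' m : ℕ, ((m : ℝ≥0∞) + 1) * retProb P A m x := by
              have := Summable.sum_add_tsum_nat_add' (f := fun m => ((m : ℝ≥0∞) + 1) * retProb P A m x)
                (k := k) ENNReal.summable
              simpa using this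
      have h2' : (∑ j ∈ Finset.range k, stayProb P A j x).toReal ≤ B.toReal :=
        ENNReal.toReal_mono hBound (hkey.trans hEle)
      rwa [ENNReal.toReal_sum (fun j _ =>
        ((stayProb_le_one hP j x).trans_lt one_lt_top).ne)] at h2'
    -- the tail term tends to zero
    have htail0 : Tendsto (fun k => S * (stayProb P A k x).toReal) atTop (𝓝 0) := by
      have h1' : Tendsto (fun k => stayProb P A k x) atTop (𝓝 0) := by
        have := ENNReal.tendsto_sum_nat_add (fun m => retProb P A m x)
          (by rw [hHarris x]; exact one_ne_top)
        refine this.congr fun k => ?_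
        rw [stayProb_eq_tail hP hPm hA hHarris k x]
        exact tsum_congr fun m => by rw [Nat.add_comm]
      have h2' : Tendsto (fun k => (stayProb P A k x).toReal) atTop (𝓝 0) := by
        have := (ENNReal.tendsto_toReal (a := 0) (by simp)).comp h1'
        exact this
      have := h2'.const_mul S
      simpa using this
    have hle : ∀ k, V n x ≤ B.toReal + S * (stayProb P A k x).toReal := fun k =>
      (drift k x).trans (add_le_add_left (hsum_le k) _)
    have hT : Tendsto (fun k => B.toReal + S * (stayProb P A k x).toReal) atTop
        (𝓝 (B.toReal)) := by
      simpa using htail0.const_add B.toReal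
    exact ge_of_tendsto' hT hle
  obtain ⟨n, x, hx, hlt⟩ := h3 B.toReal
  exact absurd (key n x hx) (not_le.mpr hlt)
end

section
/- Let {X_n} be the single-death chain with immigration on ℤ⁺ (P_{0j} = β_j, P_{i,i−1} = p_i, P_{i0} = γ_i for i ≥ 2, P_{ii} = remainder). If there exists a > 0 such that γ_i + a·p_i ≤ i^{−a} for all i ≥ 2, then for every sequence r_n = 1 + 1/n, the functions v_i^(n) = i^a·1_{i ≤ n} satisfy r_n Σ_{j ≥ 1} P_{ij} v_j^(n) − v_i^(n) + 1 ≥ 0 for all i ≥ 0, and consequently {X_n} is not geometrically ergodic. -/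
open ENNReal Set

/-- One-step transition matrix of the single-death chain with immigration on `ℤ⁺`. -/
noncomputable def Pmat (β p γ : ℕ → ℝ) (i j : ℕ) : ℝ :=
  if i = 0 then β j
  else if j = i - 1 then p i
  else if j = 0 then (if 2 ≤ i then γ i else 0)
  else if j = i then 1 - p i - (if 2 ≤ i then γ i else 0)
  else 0

/-- Geometric ergodicity of the countable chain, via the necessary condition it entails:
for some `r > 1` and `A = {0}`, the equation `V(i) = r ∑_{j ∉ A} Q_{ij} V(j) + 1` has a
finite nonnegative solution (namely `i ↦ E_i[∑_{n=0}^{τ_A^+−1} rⁿ]`, the minimal solution). -/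
def GeometricallyErgodicN (Q : ℕ → ℕ → ℝ≥0∞) : Prop :=
  ∃ r : ℝ, 1 < r ∧ ∃ V : ℕ → ℝ≥0∞, (∀ i, V i ≠ ⊤) ∧
    ∀ i : ℕ, V i = ENNReal.ofReal r * (∑' j : ℕ, if j = 0 then 0 else Q i j * V j) + 1

lemma key_ineq (a x : ℝ) (ha : 0 < a) (hx : 2 ≤ x) :
    x ^ a - (x - 1) ^ a ≤ a * x ^ a := by
  have hx0 : (0:ℝ) < x := by linarith
  have hb : (0:ℝ) ≤ 1 - 1/x := by
    have : 1/x ≤ 1/2 := by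
      apply one_div_le_one_div_of_le <;> linarith
    linarith
  have h2 : ((1:ℝ)/2) ^ a ≤ (1 - 1/x) ^ a := by
    apply Real.rpow_le_rpow (by norm_num)
    · have : 1/x ≤ 1/2 := by apply one_div_le_one_div_of_le <;> linarith
      linarith
    · exact ha.le
  have h3 : (1:ℝ) - a ≤ ((1:ℝ)/2) ^ a := by
    rw [Real.rpow_def_of_pos (by norm_num), one_div, Real.log_inv]
    have he := Real.add_one_le_exp (-Real.log 2 * a)
    have hl2 : Real.log 2 ≤ 1 := by
      have := Real.log_le_sub_one_of_pos (by norm_num : (0:ℝ) < 2); linarith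
    nlinarith
  have h4 : (x - 1) ^ a = x ^ a * (1 - 1/x) ^ a := by
    rw [← Real.mul_rpow hx0.le hb]
    congr 1
    field_simp
  have h5 : x ^ a * (1 - a) ≤ x ^ a * (1 - 1/x) ^ a :=
    mul_le_mul_of_nonneg_left (le_trans h3 h2) (Real.rpow_nonneg hx0.le a)
  nlinarith [Real.rpow_nonneg hx0.le a]

lemma Pmat_sub (β p γ : ℕ → ℝ) (i : ℕ) (hi : 2 ≤ i) :
    Pmat β p γ i (i - 1) = p i := by
  unfold Pmat
  split_ifs <;> first | rfl | omega

lemma Pmat_diag (β p γ : ℕ → ℝ) (i : ℕ) (hi : 2 ≤ i) :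
    Pmat β p γ i i = 1 - p i - γ i := by
  unfold Pmat
  split_ifs <;> first | rfl | omega

lemma Pmat_zero (β p γ : ℕ → ℝ) (i j : ℕ) (hi : 2 ≤ i)
    (hj1 : j ≠ i - 1) (hj2 : j ≠ i) (hj0 : j ≠ 0) :
    Pmat β p γ i j = 0 := by
  unfold Pmat
  split_ifs <;> first | rfl | omega

/-- For the single-death chain with immigration, if there is `a > 0` with
`γ_i + a p_i ≤ i^{−a}` for all `i ≥ 2`, then for every `n ≥ 1`, with `r_n = 1 + 1/n`, the
functions `v_i^{(n)} = i^a · 1_{i ≤ n}` satisfy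
`r_n ∑_{j ≥ 1} P_{ij} v_j^{(n)} − v_i^{(n)} + 1 ≥ 0` for all `i ≥ 0`, and consequently the
chain is not geometrically ergodic. -/
theorem single_death_chain_not_geometrically_ergodic
    (β p γ : ℕ → ℝ)
    (hβ : ∀ j, 0 ≤ β j) (hβsum : ∑' j, β j = 1)
    (hp : ∀ i, 0 ≤ p i) (hγ : ∀ i, 0 ≤ γ i)
    (hpγ : ∀ i, 2 ≤ i → 0 < γ i + p i ∧ γ i + p i ≤ 1)
    (hp1 : 0 < p 1 ∧ p 1 ≤ 1)
    (a : ℝ) (ha : 0 < a)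
    (hdrift : ∀ i : ℕ, 2 ≤ i → γ i + a * p i ≤ (i : ℝ) ^ (-a)) :
    (∀ n : ℕ, 1 ≤ n → ∀ i : ℕ,
      0 ≤ (1 + 1 / (n : ℝ)) *
            (∑' j : ℕ, if 1 ≤ j then
                Pmat β p γ i j * (if j ≤ n then (j : ℝ) ^ a else 0) else 0)
          - (if i ≤ n then (i : ℝ) ^ a else 0) + 1) ∧
    ¬ GeometricallyErgodicN (fun i j => ENNReal.ofReal (Pmat β p γ i j)) := by
  -- nonnegativity of transition matrix entries
  have hPnn : ∀ i j, 0 ≤ Pmat β p γ i j := by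
    intro i j
    unfold Pmat
    split_ifs with h1 h2 h3 h4 h5 h6
    · exact hβ j
    · exact hp i
    · exact hγ i
    · exact le_rfl
    · have := hpγ i h6; linarith
    · have hi1 : i = 1 := by omega
      subst hi1; linarith [hp1.2]
    · exact le_rfl
  constructor
  · -- Part 1: the drift inequality
    intro n hn i
    have hnpos : (0:ℝ) < 1/(n:ℝ) := by
      have : (0:ℝ) < (n:ℝ) := by exact_mod_cast hn
      positivity
    set f : ℕ → ℝ := fun j =>
      if 1 ≤ j then Pmat β p γ i j * (if j ≤ n then (j : ℝ) ^ a else 0) else 0 with hf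
    have hfnn : ∀ j, 0 ≤ f j := by
      intro j
      simp only [hf]
      split_ifs with h1 h2
      · exact mul_nonneg (hPnn i j) (Real.rpow_nonneg (Nat.cast_nonneg j) a)
      · exact mul_nonneg (hPnn i j) le_rfl
      · exact le_rfl
    have hS : 0 ≤ ∑' j, f j := tsum_nonneg hfnn
    by_cases hcase : 2 ≤ i ∧ i ≤ n
    · obtain ⟨hi2, hin⟩ := hcase
      have hi1n : i - 1 ≤ n := by omega
      have hi11 : 1 ≤ i - 1 := by omega
      have hsum : (∑' j, f j)
          = p i * ((i - 1 : ℕ) : ℝ) ^ a + (1 - p i - γ i) * (i : ℝ) ^ a := by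
        rw [tsum_eq_sum (s := {i - 1, i}) ?_]
        · rw [Finset.sum_pair (by omega : i - 1 ≠ i)]
          have e1 : f (i - 1) = p i * ((i - 1 : ℕ) : ℝ) ^ a := by
            simp only [hf]
            rw [if_pos hi11, if_pos hi1n, Pmat_sub β p γ i hi2]
          have e2 : f i = (1 - p i - γ i) * (i : ℝ) ^ a := by
            simp only [hf]
            rw [if_pos (by omega : 1 ≤ i), if_pos hin, Pmat_diag β p γ i hi2]
          rw [e1, e2]
        · intro j hj
          simp only [Finset.mem_insert, Finset.mem_singleton] at hj
          push_neg at hj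
          obtain ⟨hj1, hj2⟩ := hj
          simp only [hf]
          split_ifs with h1 h2
          · rw [Pmat_zero β p γ i j hi2 hj1 hj2 (by omega), zero_mul]
          · rw [mul_zero]
          · rfl
      rw [hsum]
      set t := (i : ℝ) ^ a with hT
      set s := ((i - 1 : ℕ) : ℝ) ^ a with hs
      have hcast : ((i - 1 : ℕ) : ℝ) = (i : ℝ) - 1 := by
        push_cast [Nat.cast_sub (by omega : 1 ≤ i)]; ring
      have hkey : t - s ≤ a * t := by
        rw [hT, hs, hcast]
        exact key_ineq a (i : ℝ) ha (by exact_mod_cast hi2)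
      have ht1 : 1 ≤ t := Real.one_le_rpow (by exact_mod_cast (by omega : 1 ≤ i)) ha.le
      have ht0 : 0 < t := by linarith
      have hs0 : 0 ≤ s := Real.rpow_nonneg (Nat.cast_nonneg _) a
      have hdr : (γ i + a * p i) * t ≤ 1 := by
        have h := hdrift i hi2
        rw [Real.rpow_neg (Nat.cast_nonneg i)] at h
        have h2 : (γ i + a * p i) * t ≤ ((i:ℝ) ^ a)⁻¹ * t :=
          mul_le_mul_of_nonneg_right h ht0.le
        rw [← hT, inv_mul_cancel₀ ht0.ne'] at h2
        exact h2
      rw [if_pos hin]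
      have hpt : p i * (t - s) ≤ a * p i * t := by
        have := mul_le_mul_of_nonneg_left hkey (hp i)
        nlinarith
      have hfac : (0:ℝ) ≤ 1 + 1/(n:ℝ) := by linarith
      nlinarith [hpt, hdr, ht1, hnpos, mul_nonneg hnpos.le (sub_nonneg.mpr ht1),
        mul_le_mul_of_nonneg_left hdr hfac, mul_le_mul_of_nonneg_left hpt hfac,
        hγ i, hp i]
    · -- small states: v i ≤ 1
      have hv : (if i ≤ n then (i : ℝ) ^ a else 0) ≤ 1 := by
        split_ifs with h1
        · have hi1 : i ≤ 1 := by omega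
          exact Real.rpow_le_one (Nat.cast_nonneg i)
            (by exact_mod_cast hi1) ha.le
        · norm_num
      have hrS : 0 ≤ (1 + 1/(n:ℝ)) * ∑' j, f j :=
        mul_nonneg (by linarith) hS
      linarith
  · -- Part 2: not geometrically ergodic
    rintro ⟨r, hr, V, hVfin, hVeq⟩
    have hr0 : (0:ℝ) < r := by linarith
    -- choose a large state N with p N + γ N ≤ 1 - 1/r
    set C : ℝ := (1 + a⁻¹) * r / (r - 1) with hC
    have hCpos : 0 < C := by
      apply div_pos
      · have : (0:ℝ) < a⁻¹ := by positivity
        nlinarith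
      · linarith
    set N : ℕ := max 2 ⌈C ^ a⁻¹⌉₊ with hN
    have hN2 : 2 ≤ N := le_max_left _ _
    have hNC : C ≤ (N : ℝ) ^ a := by
      have h1 : C ^ a⁻¹ ≤ (N : ℝ) := by
        calc C ^ a⁻¹ ≤ (⌈C ^ a⁻¹⌉₊ : ℝ) := Nat.le_ceil _
        _ ≤ (N : ℝ) := by exact_mod_cast le_max_right 2 _
      have h2 := Real.rpow_le_rpow (Real.rpow_nonneg hCpos.le _) h1 ha.le
      rwa [← Real.rpow_mul hCpos.le, inv_mul_cancel₀ ha.ne', Real.rpow_one] at h2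
    have hNpow : 0 < (N:ℝ) ^ a := lt_of_lt_of_le hCpos hNC
    have hsmall : p N + γ N ≤ 1 - 1/r := by
      have hd := hdrift N hN2
      rw [Real.rpow_neg (Nat.cast_nonneg N)] at hd
      have hinv : ((N:ℝ) ^ a)⁻¹ ≤ C⁻¹ := inv_anti₀ hCpos hNC
      have h1 : γ N + a * p N ≤ C⁻¹ := le_trans hd hinv
      have ha' : (0:ℝ) < a⁻¹ := by positivity
      have h2 : p N + γ N ≤ (1 + a⁻¹) * (γ N + a * p N) := by
        have h3 := hγ N
        have h4 := hp N
        have h5 : a⁻¹ * a = 1 := inv_mul_cancel₀ ha.ne'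
        nlinarith
      have hane : (1:ℝ) + a⁻¹ ≠ 0 := by positivity
      have h5 : (1 + a⁻¹) * C⁻¹ = (r - 1) / r := by
        rw [hC, inv_div]
        field_simp
      calc p N + γ N ≤ (1 + a⁻¹) * (γ N + a * p N) := h2
        _ ≤ (1 + a⁻¹) * C⁻¹ := by
            apply mul_le_mul_of_nonneg_left h1; positivity
        _ = (r - 1) / r := h5
        _ = 1 - 1/r := by field_simp
    have hrc : (1:ℝ) ≤ r * (1 - p N - γ N) := by
      have h1r : 1/r ≤ 1 - p N - γ N := by linarith
      calc (1:ℝ) = r * (1/r) := by field_simp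
        _ ≤ r * (1 - p N - γ N) := mul_le_mul_of_nonneg_left h1r hr0.le
    -- compute the tsum at state N
    have hts : (∑' j : ℕ, if j = 0 then 0
          else ENNReal.ofReal (Pmat β p γ N j) * V j)
        = ENNReal.ofReal (p N) * V (N - 1)
          + ENNReal.ofReal (1 - p N - γ N) * V N := by
      rw [tsum_eq_sum (s := {N - 1, N}) ?_]
      · rw [Finset.sum_pair (by omega : N - 1 ≠ N)]
        rw [if_neg (by omega : ¬ N - 1 = 0), if_neg (by omega : ¬ N = 0),
          Pmat_sub β p γ N hN2, Pmat_diag β p γ N hN2]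
      · intro j hj
        simp only [Finset.mem_insert, Finset.mem_singleton] at hj
        push_neg at hj
        obtain ⟨hj1, hj2⟩ := hj
        split_ifs with h1
        · rfl
        · rw [Pmat_zero β p γ N j hN2 hj1 hj2 h1, ENNReal.ofReal_zero, zero_mul]
    -- derive the contradiction V N + 1 ≤ V N
    have hkey : V N + 1 ≤ V N := by
      conv_rhs => rw [hVeq N]
      simp only [hts]
      calc V N + 1 = 1 * V N + 1 := by rw [one_mul]
        _ ≤ ENNReal.ofReal (r * (1 - p N - γ N)) * V N + 1 := by
            gcongr
            exact ENNReal.one_le_ofReal.mpr hrc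
        _ = ENNReal.ofReal r * (ENNReal.ofReal (1 - p N - γ N) * V N) + 1 := by
            rw [ENNReal.ofReal_mul hr0.le, mul_assoc]
        _ ≤ ENNReal.ofReal r *
              (ENNReal.ofReal (p N) * V (N - 1)
                + ENNReal.ofReal (1 - p N - γ N) * V N) + 1 := by
            gcongr
            exact le_add_self
    exact absurd hkey (not_le.mpr (ENNReal.lt_add_right (hVfin N) one_ne_zero))
end
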